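/- Let Ξ be a finite set, let p be a probability distribution on Ξ, and for each i ∈ Ξ let ρ_i = |ψ_i⟩⟨ψ_i| be a rank-one density matrix on ℂ^d. Let ρ̄ = ∑_{i∈Ξ} p_i ρ_i, with eigenvalues λ_1 ≥ … ≥ λ_d ≥ 0. Let m, d' be positive integers, let F be any function from Ξ to the m × m density matrices, let V : ℂ^m → ℂ^d ⊗ ℂ^{d'} be an isometry (V†V = I_m), and define the decoder D(X) = Tr_{2}(V X V†), the partial trace over the second factor. Then for every c > 0 and every s ≥ 1: ∑_{i∈Ξ} p_i · Tr( D(F(i)) ρ_i ) ≤ c·m + c^{1−s} · ∑_{j=1}^d λ_j^s. -/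

import Mathlib

open Finset Matrix
open scoped ComplexOrder
set_option linter.unusedSectionVars false

namespace Stmt16

variable {n k : Type*} [Fintype n] [Fintype k] [DecidableEq n] [DecidableEq k]

lemma diag_re_nonneg {A : Matrix n n ℂ} (hA : A.PosSemidef) (j : n) :
    0 ≤ (A j j).re := by
  have h := hA.re_dotProduct_nonneg (Pi.single j 1)
  simpa [dotProduct, Matrix.mulVec, Pi.single_apply, Finset.sum_ite_eq',
    Finset.sum_ite_eq] using h

lemma trace_re_nonneg {A : Matrix n n ℂ} (hA : A.PosSemidef) :
    0 ≤ (A.trace).re := by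
  rw [Matrix.trace]
  rw [Complex.re_sum]
  exact Finset.sum_nonneg fun j _ => diag_re_nonneg hA j

lemma psd_trace_mul_nonneg {A B : Matrix n n ℂ} (hA : A.PosSemidef) (hB : B.PosSemidef) :
    0 ≤ ((A * B).trace).re := by
  obtain ⟨C, rfl⟩ : ∃ C : Matrix n n ℂ, B = Cᴴ * C := by
    open scoped MatrixOrder in
    exact CStarAlgebra.nonneg_iff_eq_star_mul_self.mp hB.nonneg
  have h1 : (A * (Cᴴ * C)).trace = (C * A * Cᴴ).trace := by
    rw [← Matrix.mul_assoc, Matrix.trace_mul_comm, ← Matrix.mul_assoc]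
  rw [h1]
  exact trace_re_nonneg (hA.mul_mul_conjTranspose_same C)


lemma entry_dot (X : Matrix k n ℂ) (M : Matrix k k ℂ) (j : n) :
    (Xᴴ * M * X) j j = dotProduct (star (fun z => X z j)) (M *ᵥ (fun z => X z j)) := by
  simp only [Matrix.mul_apply, dotProduct, Matrix.mulVec, Matrix.conjTranspose_apply,
    Pi.star_apply, dotProduct]
  simp only [Finset.sum_mul, Finset.mul_sum]
  rw [Finset.sum_comm]
  exact Finset.sum_congr rfl fun z _ => Finset.sum_congr rfl fun z' _ => by ring

lemma trace_conj_unitary {U : Matrix n n ℂ} (hU : U * Uᴴ = 1) (M : Matrix n n ℂ) :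
    (Uᴴ * M * U).trace = M.trace := by
  rw [Matrix.trace_mul_cycle, hU, Matrix.one_mul]


lemma trace_mul_diag (M : Matrix n n ℂ) (v : n → ℂ) :
    (M * Matrix.diagonal v).trace = ∑ j, M j j * v j := by
  simp [Matrix.trace, Matrix.diag, Matrix.mul_diagonal]

lemma psd_sum {ι : Type*} (t : Finset ι) (f : ι → Matrix n n ℂ)
    (h : ∀ i ∈ t, (f i).PosSemidef) : (∑ i ∈ t, f i).PosSemidef := by
  classical
  induction t using Finset.induction_on with
  | empty => simpa using Matrix.PosSemidef.zero
  | insert a t' hni ih =>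
    rw [Finset.sum_insert hni]
    exact (h a (Finset.mem_insert_self a t')).add
      (ih fun i hi => h i (Finset.mem_insert_of_mem hi))


lemma lemmaT (Z : Matrix k n ℂ) (Q : Matrix k k ℂ)
    (hQ : Q.PosSemidef) (hQ1 : (1 - Q).PosSemidef)
    (A : Matrix n n ℂ) (hAeq : Zᴴ * Z = A) (hA : A.IsHermitian)
    (c : ℝ) (hc : 0 < c) :
    ((Q * (Z * Zᴴ)).trace).re ≤ c * (Q.trace).re + ∑ j, max (hA.eigenvalues j - c) 0 := by
  have hApsd : A.PosSemidef := hAeq ▸ Matrix.posSemidef_conjTranspose_mul_self Z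
  set κ : n → ℝ := hA.eigenvalues with hκdef
  have hκ0 : ∀ j, 0 ≤ κ j := fun j => hApsd.eigenvalues_nonneg j
  set U : Matrix n n ℂ := (hA.eigenvectorUnitary : Matrix n n ℂ) with hUdef
  have hU1 : Uᴴ * U = 1 := by
    have := Matrix.mem_unitaryGroup_iff'.mp hA.eigenvectorUnitary.2
    simpa [Matrix.star_eq_conjTranspose] using this
  have hU2 : U * Uᴴ = 1 := by
    have := Matrix.mem_unitaryGroup_iff.mp hA.eigenvectorUnitary.2
    simpa [Matrix.star_eq_conjTranspose] using this
  have hdiag : Uᴴ * A * U = Matrix.diagonal (fun j => (κ j : ℂ)) := by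
    have := hA.conjStarAlgAut_star_eigenvectorUnitary
    simpa [Matrix.star_eq_conjTranspose, Function.comp_def, Unitary.conjStarAlgAut_star_apply] using this
  set Xt := Z * U with hXtdef
  have hXtXt : Xtᴴ * Xt = Matrix.diagonal (fun j => (κ j : ℂ)) := by
    rw [hXtdef, Matrix.conjTranspose_mul, ← hdiag, ← hAeq]
    rw [Matrix.mul_assoc, Matrix.mul_assoc, Matrix.mul_assoc]
  set e : n → ℝ := fun j => if κ j = 0 then 0 else (κ j)⁻¹ with hedef
  have he0 : ∀ j, 0 ≤ e j := by
    intro j; by_cases h : κ j = 0 <;> simp [hedef, h, inv_nonneg, hκ0 j]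
  set E := Matrix.diagonal (fun j => (e j : ℂ)) with hEdef
  set Es := Matrix.diagonal (fun j => (Real.sqrt (e j) : ℂ)) with hEsdef
  have hEs : Es * Es = E := by
    rw [hEsdef, hEdef, Matrix.diagonal_mul_diagonal]
    exact congrArg Matrix.diagonal (funext fun j => by
      rw [← Complex.ofReal_mul, Real.mul_self_sqrt (he0 j)])
  have hEsh : Esᴴ = Es := by
    rw [hEsdef, Matrix.diagonal_conjTranspose]
    exact congrArg Matrix.diagonal (funext fun j => by
      simp [Function.comp, Complex.star_def, Complex.conj_ofReal])
  set Θ := Xt * E * Xtᴴ with hΘdef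
  have hΘpsd : Θ.PosSemidef := by
    have h1 : (Xt * Es) * (Xt * Es)ᴴ = Xt * (Es * Es) * Xtᴴ := by
      rw [Matrix.conjTranspose_mul, hEsh]
      simp only [Matrix.mul_assoc]
    have h2 : Θ = (Xt * Es) * (Xt * Es)ᴴ := by rw [h1, hEs, hΘdef]
    rw [h2]
    exact Matrix.posSemidef_self_mul_conjTranspose _
  have hEDEfun : ∀ j, ((e j : ℂ) * (κ j : ℂ)) * (e j : ℂ) = (e j : ℂ) := by
    intro j
    by_cases h : κ j = 0
    · simp [hedef, h]
    · have he : e j = (κ j)⁻¹ := by rw [hedef]; simp [h]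
      rw [he, ← Complex.ofReal_mul, ← Complex.ofReal_mul]
      congr 1
      field_simp
  have hEDE : E * Matrix.diagonal (fun j => (κ j : ℂ)) * E = E := by
    rw [hEdef, Matrix.diagonal_mul_diagonal, Matrix.diagonal_mul_diagonal]
    exact congrArg Matrix.diagonal (funext hEDEfun)
  have hΘΘ : Θ * Θ = Θ := by
    calc Θ * Θ = Xt * E * (Xtᴴ * Xt) * E * Xtᴴ := by
          rw [hΘdef]; simp only [Matrix.mul_assoc]
      _ = Xt * (E * Matrix.diagonal (fun j => (κ j : ℂ)) * E) * Xtᴴ := by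
          rw [hXtXt]; simp only [Matrix.mul_assoc]
      _ = Θ := by rw [hEDE, hΘdef]
  have hΘh : Θᴴ = Θ := hΘpsd.isHermitian
  have h1Θ : ((1 : Matrix k k ℂ) - Θ).PosSemidef := by
    have hh : ((1 : Matrix k k ℂ) - Θ)ᴴ * (1 - Θ) = 1 - Θ := by
      rw [Matrix.conjTranspose_sub, Matrix.conjTranspose_one, hΘh]
      rw [Matrix.sub_mul, Matrix.mul_sub, Matrix.mul_sub, hΘΘ]
      simp only [Matrix.mul_one, Matrix.one_mul]
      abel
    rw [← hh]
    exact Matrix.posSemidef_conjTranspose_mul_self _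
  have hTrQΘ : ((Q * Θ).trace).re ≤ (Q.trace).re := by
    have h := psd_trace_mul_nonneg hQ h1Θ
    have heq : (Q * (1 - Θ)).trace = Q.trace - (Q * Θ).trace := by
      rw [Matrix.mul_sub, Matrix.mul_one, Matrix.trace_sub]
    rw [heq, Complex.sub_re] at h
    linarith
  set θ : n → ℂ := fun j => (Xtᴴ * Q * Xt) j j with hθdef
  have hθ0 : ∀ j, 0 ≤ (θ j).re := by
    intro j
    have := hQ.re_dotProduct_nonneg (fun z => Xt z j)
    rw [hθdef]; simp only []
    rw [entry_dot]
    exact this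
  have hθκ : ∀ j, (θ j).re ≤ κ j := by
    intro j
    have h := hQ1.re_dotProduct_nonneg (fun z => Xt z j)
    rw [← entry_dot] at h
    have hex : Xtᴴ * (1 - Q) * Xt = Xtᴴ * Xt - Xtᴴ * Q * Xt := by
      rw [Matrix.mul_sub, Matrix.mul_one, Matrix.sub_mul]
    rw [hex, hXtXt] at h
    simp only [RCLike.re_to_complex] at h
    have heq2 : ((Matrix.diagonal (fun j => (κ j : ℂ)) - Xtᴴ * Q * Xt) j j).re
        = κ j - (θ j).re := by
      simp [Matrix.sub_apply, Matrix.diagonal_apply_eq, Complex.sub_re, hθdef]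
    rw [heq2] at h
    linarith
  have hsum : (Q * (Z * Zᴴ)).trace = ∑ j, θ j := by
    have h1 : (Q * (Z * Zᴴ)).trace = (Zᴴ * Q * Z).trace := by
      rw [← Matrix.mul_assoc, Matrix.trace_mul_comm, Matrix.mul_assoc]
    have h2 : (Zᴴ * Q * Z).trace = (Uᴴ * (Zᴴ * Q * Z) * U).trace :=
      (trace_conj_unitary hU2 _).symm
    have h3 : Uᴴ * (Zᴴ * Q * Z) * U = Xtᴴ * Q * Xt := by
      rw [hXtdef, Matrix.conjTranspose_mul]
      simp only [Matrix.mul_assoc]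
    rw [h1, h2, h3, Matrix.trace]
    rfl
  have hQΘsum : (Q * Θ).trace = ∑ j, θ j * (e j : ℂ) := by
    have h1 : (Q * Θ).trace = ((Xtᴴ * Q * Xt) * E).trace := by
      rw [hΘdef, ← Matrix.mul_assoc, ← Matrix.mul_assoc, Matrix.trace_mul_comm]
      simp only [Matrix.mul_assoc]
    rw [h1, hEdef, trace_mul_diag]
  have key : ∑ j, ((θ j).re - c * ((θ j).re * e j)) ≤ ∑ j, max (κ j - c) 0 := by
    apply Finset.sum_le_sum
    intro j _
    by_cases h : κ j = 0
    · have h1 : (θ j).re ≤ 0 := (hθκ j).trans (le_of_eq h)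
      simp only [hedef, if_pos h]
      simpa using h1.trans (le_max_right _ 0)
    · have hκpos : 0 < κ j := lt_of_le_of_ne (hκ0 j) (Ne.symm h)
      have hinv : κ j * (κ j)⁻¹ = 1 := mul_inv_cancel₀ h
      simp only [hedef, if_neg h]
      rcases le_or_gt c (κ j) with hcκ | hcκ
      · have hmax : max (κ j - c) 0 = κ j - c := max_eq_left (by linarith)
        rw [hmax]
        have ht := hθκ j
        have ht0 := hθ0 j
        have h1' : c * (κ j)⁻¹ ≤ 1 := by
          rw [← hinv]
          exact mul_le_mul_of_nonneg_right hcκ (inv_nonneg.mpr hκpos.le)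
        have hcinv : c * (κ j * (κ j)⁻¹) = c := by rw [hinv, mul_one]
        nlinarith [mul_nonneg (sub_nonneg.mpr ht) (sub_nonneg.mpr h1'), hcinv]
      · have ht0 := hθ0 j
        have h1'' : (1 : ℝ) ≤ c * (κ j)⁻¹ := by
          rw [← hinv]
          exact mul_le_mul_of_nonneg_right hcκ.le (inv_nonneg.mpr hκpos.le)
        have : (θ j).re - c * ((θ j).re * (κ j)⁻¹) ≤ 0 := by
          nlinarith [mul_nonneg ht0 (sub_nonneg.mpr h1'')]
        exact this.trans (le_max_right _ 0)
  have hre1 : ((Q * (Z * Zᴴ)).trace).re = ∑ j, (θ j).re := by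
    rw [hsum, Complex.re_sum]
  have hre2 : ((Q * Θ).trace).re = ∑ j, (θ j).re * e j := by
    rw [hQΘsum, Complex.re_sum]
    refine Finset.sum_congr rfl fun j _ => ?_
    simp [Complex.mul_re, Complex.ofReal_re, Complex.ofReal_im]
  have hc' : c * ((Q * Θ).trace).re ≤ c * (Q.trace).re :=
    mul_le_mul_of_nonneg_left hTrQΘ hc.le
  rw [hre1]
  rw [hre2] at hc'
  have expand : ∑ j, ((θ j).re - c * ((θ j).re * e j))
      = ∑ j, (θ j).re - c * ∑ j, (θ j).re * e j := by
    rw [Finset.sum_sub_distrib, Finset.mul_sum]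
  rw [expand] at key
  linarith


lemma key2 [Nonempty n] [Nonempty k]
    (K : Matrix k n ℂ) (Fm : Matrix n n ℂ) (hF : Fm.PosSemidef) (hFtr : Fm.trace = 1) :
    ∃ χ : k → ℂ, dotProduct (star χ) χ = 1 ∧
      ((Fm * (Kᴴ * K)).trace).re ≤ (dotProduct (star χ) ((K * Kᴴ) *ᵥ χ)).re := by
  set G := Kᴴ * K with hGdef
  have hG : G.PosSemidef := Matrix.posSemidef_conjTranspose_mul_self K
  have hGh : G.IsHermitian := hG.isHermitian
  set κ : n → ℝ := hGh.eigenvalues with hκdef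
  have hκ0 : ∀ j, 0 ≤ κ j := fun j => hG.eigenvalues_nonneg j
  obtain ⟨j0, _, hj0max⟩ := Finset.exists_max_image Finset.univ κ Finset.univ_nonempty
  set γ : ℝ := κ j0 with hγdef
  have hγ0 : 0 ≤ γ := hκ0 j0
  set U : Matrix n n ℂ := (hGh.eigenvectorUnitary : Matrix n n ℂ) with hUdef
  have hU1 : Uᴴ * U = 1 := by
    have := Matrix.mem_unitaryGroup_iff'.mp hGh.eigenvectorUnitary.2
    simpa [Matrix.star_eq_conjTranspose] using this
  have hU2 : U * Uᴴ = 1 := by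
    have := Matrix.mem_unitaryGroup_iff.mp hGh.eigenvectorUnitary.2
    simpa [Matrix.star_eq_conjTranspose] using this
  set Dm := Matrix.diagonal (fun j => (κ j : ℂ)) with hDmdef
  have hdiag : Uᴴ * G * U = Dm := by
    have := hGh.conjStarAlgAut_star_eigenvectorUnitary
    simpa [Matrix.star_eq_conjTranspose, Function.comp_def, Unitary.conjStarAlgAut_star_apply] using this
  have hspec : G * U = U * Dm := by
    have h1 : U * (Uᴴ * G * U) = U * Dm := by rw [hdiag]
    calc G * U = (U * Uᴴ) * G * U := by rw [hU2, Matrix.one_mul]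
      _ = U * (Uᴴ * G * U) := by simp only [Matrix.mul_assoc]
      _ = U * Dm := h1
  -- part 1
  have hpart1 : ((Fm * G).trace).re ≤ γ := by
    have hGeq : G = U * Dm * Uᴴ := by
      calc G = G * (U * Uᴴ) := by rw [hU2, Matrix.mul_one]
        _ = (G * U) * Uᴴ := (Matrix.mul_assoc G U Uᴴ).symm
        _ = U * Dm * Uᴴ := by rw [hspec]
    have h1 : (Fm * G).trace = ((Uᴴ * Fm * U) * Dm).trace := by
      rw [hGeq, ← Matrix.mul_assoc, ← Matrix.mul_assoc, Matrix.trace_mul_comm]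
      simp only [Matrix.mul_assoc]
    rw [h1, hDmdef, trace_mul_diag, Complex.re_sum]
    have hFU : (Uᴴ * Fm * U).PosSemidef := hF.conjTranspose_mul_mul_same U
    have hsum1 : ∑ j, ((Uᴴ * Fm * U) j j).re = 1 := by
      have h2 : (Uᴴ * Fm * U).trace = 1 := by rw [trace_conj_unitary hU2, hFtr]
      have h3 := congrArg Complex.re h2
      rw [Matrix.trace, Complex.re_sum] at h3
      simpa using h3
    calc ∑ j, ((Uᴴ * Fm * U) j j * (κ j : ℂ)).re
        = ∑ j, ((Uᴴ * Fm * U) j j).re * κ j := by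
          refine Finset.sum_congr rfl fun j _ => ?_
          simp [Complex.mul_re]
      _ ≤ ∑ j, ((Uᴴ * Fm * U) j j).re * γ := by
          refine Finset.sum_le_sum fun j _ => ?_
          exact mul_le_mul_of_nonneg_left (hj0max j (Finset.mem_univ j))
            (diag_re_nonneg hFU j)
      _ = γ := by rw [← Finset.sum_mul, hsum1, one_mul]
  by_cases hγpos : γ ≤ 0
  · -- trivial case
    refine ⟨Pi.single (Classical.arbitrary k) 1, by simp, ?_⟩
    have h2 : 0 ≤ (dotProduct (star (Pi.single (Classical.arbitrary k) (1:ℂ)))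
        ((K * Kᴴ) *ᵥ Pi.single (Classical.arbitrary k) 1)).re := by
      have := (Matrix.posSemidef_self_mul_conjTranspose K).re_dotProduct_nonneg
        (Pi.single (Classical.arbitrary k) 1)
      simpa [RCLike.re_to_complex] using this
    exact hpart1.trans (le_trans hγpos h2)
  · push_neg at hγpos
    set u : n → ℂ := fun l => U l j0 with hudef
    have hGu : G *ᵥ u = (γ : ℂ) • u := by
      funext r
      have h1 : (G * U) r j0 = (U * Dm) r j0 := by rw [hspec]
      rw [hDmdef, Matrix.mul_diagonal] at h1
      calc (G *ᵥ u) r = (G * U) r j0 := by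
            simp [Matrix.mulVec, Matrix.mul_apply, hudef, dotProduct]
        _ = (γ : ℂ) • u r := by rw [h1]; simp [hudef, hγdef]; ring
    have hu1 : dotProduct (star u) u = 1 := by
      have h1 : (Uᴴ * U) j0 j0 = 1 := by rw [hU1]; simp
      rw [← h1]
      simp [Matrix.mul_apply, dotProduct, hudef, Matrix.conjTranspose_apply]
    set sγ := Real.sqrt γ with hsγdef
    have hsγpos : 0 < sγ := Real.sqrt_pos.mpr hγpos
    have hsγ2 : sγ * sγ = γ := Real.mul_self_sqrt hγ0
    have hsγne : (sγ : ℂ) ≠ 0 := by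
      simpa using Complex.ofReal_ne_zero.mpr hsγpos.ne'
    set χ : k → ℂ := ((sγ : ℂ))⁻¹ • (K *ᵥ u) with hχdef
    have hKuKu : dotProduct (star (K *ᵥ u)) (K *ᵥ u) = (γ : ℂ) := by
      rw [Matrix.star_mulVec, ← dotProduct_mulVec, Matrix.mulVec_mulVec, ← hGdef,
        hGu, dotProduct_smul, hu1]
      simp
    have hχ1 : dotProduct (star χ) χ = 1 := by
      rw [hχdef, star_smul, smul_dotProduct, dotProduct_smul, hKuKu]
      have : star (((sγ : ℂ))⁻¹) = ((sγ : ℂ))⁻¹ := by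
        simp [Complex.star_def, Complex.conj_ofReal]
      rw [this, show ((γ:ℝ):ℂ) = (sγ:ℂ)*(sγ:ℂ) by rw [← Complex.ofReal_mul, hsγ2]]
      field_simp
      simp only [smul_eq_mul]
      field_simp
    refine ⟨χ, hχ1, ?_⟩
    have hKKχ : (K * Kᴴ) *ᵥ χ = ((sγ : ℂ))⁻¹ • ((γ : ℂ) • (K *ᵥ u)) := by
      rw [hχdef, Matrix.mulVec_smul]
      congr 1
      rw [Matrix.mulVec_mulVec, Matrix.mul_assoc, ← hGdef, ← Matrix.mulVec_mulVec,
        hGu, Matrix.mulVec_smul]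
    have hval : dotProduct (star χ) ((K * Kᴴ) *ᵥ χ) = (γ : ℂ) := by
      rw [hKKχ, hχdef, star_smul, smul_dotProduct]
      have hst : star (((sγ : ℂ))⁻¹) = ((sγ : ℂ))⁻¹ := by
        simp [Complex.star_def, Complex.conj_ofReal]
      rw [hst, dotProduct_smul, dotProduct_smul, hKuKu,
        show ((γ:ℝ):ℂ) = (sγ:ℂ)*(sγ:ℂ) by rw [← Complex.ofReal_mul, hsγ2]]
      field_simp
      simp only [smul_eq_mul]
      field_simp
    rw [hval]
    simpa using hpart1


lemma sandwich (U A B : Matrix n n ℂ) (hU1 : Uᴴ * U = 1) :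
    (U * A * Uᴴ) * (U * B * Uᴴ) = U * (A * B) * Uᴴ := by
  have h : Uᴴ * (U * B * Uᴴ) = B * Uᴴ := by
    rw [← Matrix.mul_assoc, ← Matrix.mul_assoc, hU1, Matrix.one_mul]
  calc (U * A * Uᴴ) * (U * B * Uᴴ) = U * A * (Uᴴ * (U * B * Uᴴ)) := by
        simp only [Matrix.mul_assoc]
    _ = U * A * (B * Uᴴ) := by rw [h]
    _ = U * (A * B) * Uᴴ := by simp only [Matrix.mul_assoc]

lemma trace_usand (U A : Matrix n n ℂ) (hU1 : Uᴴ * U = 1) :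
    (U * A * Uᴴ).trace = A.trace := by
  rw [Matrix.trace_mul_cycle, hU1, Matrix.one_mul]

end Stmt16
/-- Partial trace over the second tensor factor. -/
noncomputable def ptrace2 {d d' : ℕ}
    (X : Matrix (Fin d × Fin d') (Fin d × Fin d') ℂ) : Matrix (Fin d) (Fin d) ℂ :=
  Matrix.of fun a a' => ∑ b, X (a, b) (a', b)

namespace Stmt16

lemma trace_ptrace_eq {d d' : ℕ} (M : Matrix (Fin d × Fin d') (Fin d × Fin d') ℂ)
    (u : Fin d → ℂ) (Ai : Matrix (Fin d × Fin d') (Fin d') ℂ)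
    (hAi : Ai = Matrix.of (fun (z : Fin d × Fin d') b => u z.1 * (if z.2 = b then 1 else 0))) :
    (ptrace2 M * Matrix.vecMulVec u (star u)).trace = (M * (Ai * Aiᴴ)).trace := by
  have hAA : ∀ z z' : Fin d × Fin d', (Ai * Aiᴴ) z z' =
      u z.1 * star (u z'.1) * (if z.2 = z'.2 then 1 else 0) := by
    intro z z'
    rw [Matrix.mul_apply]
    have hsummand : ∀ b, Ai z b * star (Ai z' b)
        = (if z.2 = b then (if z'.2 = b then u z.1 * star (u z'.1) else 0) else 0) := by
      intro b
      simp only [hAi, Matrix.of_apply]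
      by_cases h1 : z.2 = b <;> by_cases h2 : z'.2 = b <;> simp [h1, h2]
    simp only [Matrix.conjTranspose_apply, hsummand]
    rw [Finset.sum_ite_eq Finset.univ z.2
      (fun b => if z'.2 = b then u z.1 * star (u z'.1) else 0)]
    simp only [Finset.mem_univ, if_true]
    by_cases h : z.2 = z'.2
    · simp [h]
    · rw [if_neg h, if_neg (fun hh : z'.2 = z.2 => h hh.symm), mul_zero]
  have hLHS : (ptrace2 M * Matrix.vecMulVec u (star u)).trace
      = ∑ a : Fin d, ∑ b : Fin d', ∑ a' : Fin d, M (a, b) (a', b) * (u a' * star (u a)) := by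
    rw [Matrix.trace]
    simp only [Matrix.diag_apply, Matrix.mul_apply, Matrix.vecMulVec_apply, ptrace2,
      Matrix.of_apply, Pi.star_apply]
    refine Finset.sum_congr rfl fun a _ => ?_
    rw [Finset.sum_comm]
    refine Finset.sum_congr rfl fun b _ => ?_
    rw [Finset.sum_mul]
  have hRHS : (M * (Ai * Aiᴴ)).trace
      = ∑ a : Fin d, ∑ b : Fin d', ∑ a' : Fin d, M (a, b) (a', b) * (u a' * star (u a)) := by
    rw [Matrix.trace]
    simp only [Matrix.diag_apply, Matrix.mul_apply, hAA]
    rw [Fintype.sum_prod_type]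
    refine Finset.sum_congr rfl fun a _ => ?_
    refine Finset.sum_congr rfl fun b _ => ?_
    rw [Fintype.sum_prod_type]
    refine Finset.sum_congr rfl fun a' _ => ?_
    rw [Finset.sum_eq_single b]
    · simp
    · intro b' _ hb'
      simp [hb']
    · intro h
      exact absurd (Finset.mem_univ b) h
  rw [hLHS, hRHS]

end Stmt16

open Stmt16 in
theorem stmt_16 (Ξ : Type) [Fintype Ξ] {d : ℕ}
    (p : Ξ → ℝ) (hp : ∀ i, 0 ≤ p i) (hpsum : ∑ i, p i = 1)
    (ψ : Ξ → Fin d → ℂ) (hψ : ∀ i, ∑ j, Complex.normSq (ψ i j) = 1)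
    (ρ : Ξ → Matrix (Fin d) (Fin d) ℂ)
    (hρ : ∀ i, ρ i = Matrix.vecMulVec (ψ i) (star (ψ i)))
    (ρbar : Matrix (Fin d) (Fin d) ℂ) (hρbar : ρbar = ∑ i, (p i : ℂ) • ρ i)
    (hherm : ρbar.IsHermitian)
    (m d' : ℕ) (hm : 0 < m) (hd' : 0 < d')
    (F : Ξ → Matrix (Fin m) (Fin m) ℂ)
    (hF : ∀ i, (F i).PosSemidef ∧ (F i).trace = 1)
    (V : Matrix (Fin d × Fin d') (Fin m) ℂ) (hV : Vᴴ * V = 1)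
    (c : ℝ) (hc : 0 < c) (s : ℝ) (hs : 1 ≤ s) :
    ∑ i, p i * ((ptrace2 (V * F i * Vᴴ) * ρ i).trace).re ≤
      c * m + c ^ (1 - s) * ∑ j, (hherm.eigenvalues j) ^ s := by
  classical
  haveI : Nonempty (Fin m) := ⟨⟨0, hm⟩⟩
  haveI : Nonempty (Fin d') := ⟨⟨0, hd'⟩⟩
  set P : Matrix (Fin d × Fin d') (Fin d × Fin d') ℂ := V * Vᴴ with hPdef
  have hPpsd : P.PosSemidef := Matrix.posSemidef_self_mul_conjTranspose V
  have hPP : P * P = P := by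
    calc P * P = V * (Vᴴ * V) * Vᴴ := by rw [hPdef]; simp only [Matrix.mul_assoc]
      _ = P := by rw [hV, Matrix.mul_one, hPdef]
  have hPh : Pᴴ = P := hPpsd.isHermitian
  have hP1 : ((1 : Matrix (Fin d × Fin d') (Fin d × Fin d') ℂ) - P).PosSemidef := by
    have hh : ((1 : Matrix (Fin d × Fin d') (Fin d × Fin d') ℂ) - P)ᴴ * (1 - P) = 1 - P := by
      rw [Matrix.conjTranspose_sub, Matrix.conjTranspose_one, hPh,
        Matrix.sub_mul, Matrix.mul_sub, Matrix.mul_sub, hPP]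
      simp only [Matrix.mul_one, Matrix.one_mul]
      abel
    rw [← hh]
    exact Matrix.posSemidef_conjTranspose_mul_self _
  have hPtr : (P.trace).re = m := by
    rw [hPdef, Matrix.trace_mul_comm, hV, Matrix.trace_one]
    simp
  -- Step 2 : per-i choice of χ
  have step2 : ∀ i : Ξ, ∃ χ : Fin d' → ℂ, dotProduct (star χ) χ = 1 ∧
      ((ptrace2 (V * F i * Vᴴ) * ρ i).trace).re ≤
        (dotProduct (star (fun z : Fin d × Fin d' => ψ i z.1 * χ z.2))
          (P *ᵥ (fun z : Fin d × Fin d' => ψ i z.1 * χ z.2))).re := by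
    intro i
    set Ai : Matrix (Fin d × Fin d') (Fin d') ℂ :=
      Matrix.of (fun z b => ψ i z.1 * (if z.2 = b then 1 else 0)) with hAidef
    set K : Matrix (Fin d') (Fin m) ℂ := Aiᴴ * V with hKdef
    obtain ⟨χi, hχa, hχb⟩ := key2 K (F i) (hF i).1 (hF i).2
    refine ⟨χi, hχa, ?_⟩
    have htr1 : (ptrace2 (V * F i * Vᴴ) * ρ i).trace
        = ((V * F i * Vᴴ) * (Ai * Aiᴴ)).trace := by
      rw [hρ i]
      exact trace_ptrace_eq _ (ψ i) Ai hAidef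
    have htr2 : ((V * F i * Vᴴ) * (Ai * Aiᴴ)).trace = ((F i) * (Kᴴ * K)).trace := by
      have hKK : Kᴴ * K = Vᴴ * (Ai * Aiᴴ) * V := by
        rw [hKdef, Matrix.conjTranspose_mul, Matrix.conjTranspose_conjTranspose]
        simp only [Matrix.mul_assoc]
      rw [hKK]
      calc ((V * F i * Vᴴ) * (Ai * Aiᴴ)).trace
          = (V * (F i * (Vᴴ * (Ai * Aiᴴ)))).trace := by simp only [Matrix.mul_assoc]
        _ = ((F i * (Vᴴ * (Ai * Aiᴴ))) * V).trace := Matrix.trace_mul_comm _ _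
        _ = (F i * (Vᴴ * (Ai * Aiᴴ) * V)).trace := by simp only [Matrix.mul_assoc]
    have hφ : (fun z : Fin d × Fin d' => ψ i z.1 * χi z.2) = Ai *ᵥ χi := by
      funext z
      simp only [Matrix.mulVec, dotProduct, hAidef, Matrix.of_apply, ite_mul, one_mul,
        zero_mul, mul_ite, mul_zero]
      simp [Finset.sum_ite_eq]
    have hKKH : K * Kᴴ = Aiᴴ * ((P * Ai)) := by
      rw [hKdef, Matrix.conjTranspose_mul, Matrix.conjTranspose_conjTranspose, hPdef]
      simp only [Matrix.mul_assoc]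
    have hdot : dotProduct (star (Ai *ᵥ χi)) (P *ᵥ (Ai *ᵥ χi))
        = dotProduct (star χi) ((K * Kᴴ) *ᵥ χi) := by
      rw [Matrix.star_mulVec, Matrix.mulVec_mulVec, ← dotProduct_mulVec,
        Matrix.mulVec_mulVec, hKKH]
    rw [htr1, htr2, hφ, hdot]
    exact hχb
  choose χ hχ1 hχ2 using step2
  set X : Matrix (Fin d × Fin d') Ξ ℂ :=
    Matrix.of (fun z i => (Real.sqrt (p i) : ℂ) * (ψ i z.1 * χ i z.2)) with hXdef
  set Y : Matrix (Fin d) Ξ ℂ := Matrix.of (fun a i => (Real.sqrt (p i) : ℂ) * ψ i a) with hYdef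
  have hYρ : Y * Yᴴ = ρbar := by
    rw [hρbar]
    ext a a'
    rw [Matrix.mul_apply, Matrix.sum_apply]
    refine Finset.sum_congr rfl fun i _ => ?_
    rw [hρ i]
    simp only [hYdef, Matrix.of_apply, Matrix.conjTranspose_apply, Matrix.smul_apply,
      Matrix.vecMulVec_apply, smul_eq_mul, Pi.star_apply, star_mul', Complex.star_def,
      Complex.conj_ofReal]
    have hq : ((Real.sqrt (p i) : ℂ)) * ((Real.sqrt (p i) : ℂ)) = ((p i : ℝ) : ℂ) := by
      rw [← Complex.ofReal_mul, Real.mul_self_sqrt (hp i)]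
    calc (Real.sqrt (p i) : ℂ) * ψ i a * ((Real.sqrt (p i) : ℂ) * (starRingEnd ℂ) (ψ i a'))
        = ((Real.sqrt (p i) : ℂ) * (Real.sqrt (p i) : ℂ)) * (ψ i a * (starRingEnd ℂ) (ψ i a')) := by
          ring
      _ = ((p i : ℝ) : ℂ) * (ψ i a * (starRingEnd ℂ) (ψ i a')) := by rw [hq]
  have hρpsd : ρbar.PosSemidef := hYρ ▸ Matrix.posSemidef_self_mul_conjTranspose Y
  have hlam0g : ∀ j, 0 ≤ hherm.eigenvalues j := fun j => hρpsd.eigenvalues_nonneg j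
  have hsumtr : ∑ i, p i * (dotProduct (star (fun z : Fin d × Fin d' => ψ i z.1 * χ i z.2))
        (P *ᵥ (fun z : Fin d × Fin d' => ψ i z.1 * χ i z.2))).re
      = ((P * (X * Xᴴ)).trace).re := by
    have h1 : (P * (X * Xᴴ)).trace = (Xᴴ * P * X).trace := by
      rw [← Matrix.mul_assoc, Matrix.trace_mul_comm, ← Matrix.mul_assoc]
    rw [h1, Matrix.trace, Complex.re_sum]
    refine Finset.sum_congr rfl fun i _ => ?_
    rw [Matrix.diag_apply, entry_dot X P i]
    have hcol : (fun z => X z i)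
        = ((Real.sqrt (p i) : ℂ)) • (fun z : Fin d × Fin d' => ψ i z.1 * χ i z.2) := by
      funext z
      simp [hXdef, Pi.smul_apply, smul_eq_mul]
    rw [hcol, star_smul, Matrix.mulVec_smul, smul_dotProduct, dotProduct_smul]
    have hst : star ((Real.sqrt (p i) : ℂ)) = ((Real.sqrt (p i) : ℂ)) := by
      simp [Complex.star_def, Complex.conj_ofReal]
    rw [hst, smul_eq_mul, smul_eq_mul, ← mul_assoc, ← Complex.ofReal_mul,
      Real.mul_self_sqrt (hp i)]
    simp [Complex.mul_re, Complex.ofReal_re, Complex.ofReal_im]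
  have hSpsd : (Xᴴ * X).PosSemidef := Matrix.posSemidef_conjTranspose_mul_self X
  have hSh : (Xᴴ * X).IsHermitian := hSpsd.isHermitian
  have hT1 := lemmaT X P hPpsd hP1 (Xᴴ * X) rfl hSh c hc
  have hmid : ∑ j, max (hSh.eigenvalues j - c) 0 ≤ ∑ j, max (hherm.eigenvalues j - c) 0 := by
    set κ : Ξ → ℝ := hSh.eigenvalues with hκdef
    set U : Matrix Ξ Ξ ℂ := (hSh.eigenvectorUnitary : Matrix Ξ Ξ ℂ) with hUdef
    have hU1 : Uᴴ * U = 1 := by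
      have := Matrix.mem_unitaryGroup_iff'.mp hSh.eigenvectorUnitary.2
      simpa [Matrix.star_eq_conjTranspose] using this
    have hU2 : U * Uᴴ = 1 := by
      have := Matrix.mem_unitaryGroup_iff.mp hSh.eigenvectorUnitary.2
      simpa [Matrix.star_eq_conjTranspose] using this
    have hdiagS : Uᴴ * (Xᴴ * X) * U = Matrix.diagonal (fun j => (κ j : ℂ)) := by
      have := hSh.conjStarAlgAut_star_eigenvectorUnitary
      simpa [Matrix.star_eq_conjTranspose, Function.comp_def, Unitary.conjStarAlgAut_star_apply] using this
    have hSeq : Xᴴ * X = U * Matrix.diagonal (fun j => (κ j : ℂ)) * Uᴴ := by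
      calc Xᴴ * X = (U * Uᴴ) * (Xᴴ * X) * (U * Uᴴ) := by
            rw [hU2, Matrix.one_mul, Matrix.mul_one]
        _ = U * (Uᴴ * (Xᴴ * X) * U) * Uᴴ := by simp only [Matrix.mul_assoc]
        _ = U * Matrix.diagonal (fun j => (κ j : ℂ)) * Uᴴ := by rw [hdiagS]
    set nd : Ξ → ℝ := fun j => if c < κ j then 1 else 0 with hnddef
    have hnd0 : ∀ j, (0:ℝ) ≤ nd j := fun j => by
      by_cases h : c < κ j <;> simp [hnddef, h]
    have hnd1 : ∀ j, nd j ≤ 1 := fun j => by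
      by_cases h : c < κ j <;> simp [hnddef, h]
    set L := U * Matrix.diagonal (fun j => (nd j : ℂ)) * Uᴴ with hLdef
    have hLpsd : L.PosSemidef := by
      refine Matrix.PosSemidef.mul_mul_conjTranspose_same ?_ U
      refine Matrix.PosSemidef.diagonal ?_
      intro j
      simpa using Complex.zero_le_real.mpr (hnd0 j)
    have h1L : ((1 : Matrix Ξ Ξ ℂ) - L).PosSemidef := by
      have h1eq : (1 : Matrix Ξ Ξ ℂ) - L
          = U * Matrix.diagonal (fun j => ((1 - nd j : ℝ) : ℂ)) * Uᴴ := by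
        have hdd : Matrix.diagonal (fun j => ((1 - nd j : ℝ) : ℂ))
            = 1 - Matrix.diagonal (fun j => (nd j : ℂ)) := by
          rw [← Matrix.diagonal_one, Matrix.diagonal_sub]
          congr 1
          funext j
          push_cast
          ring
        rw [hdd, Matrix.mul_sub, Matrix.mul_one, Matrix.sub_mul, hU2, hLdef]
      rw [h1eq]
      refine Matrix.PosSemidef.mul_mul_conjTranspose_same ?_ U
      refine Matrix.PosSemidef.diagonal ?_
      intro j
      have hj : (0:ℝ) ≤ 1 - nd j := by linarith [hnd1 j]
      simpa using Complex.zero_le_real.mpr hj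
    have hLtr : L.trace = ∑ j, ((nd j : ℝ) : ℂ) := by
      rw [hLdef, trace_usand _ _ hU1, Matrix.trace_diagonal]
    have hLS : (L * (Xᴴ * X)).trace = ∑ j, ((nd j : ℂ) * (κ j : ℂ)) := by
      rw [hSeq, hLdef, sandwich _ _ _ hU1, Matrix.diagonal_mul_diagonal,
        trace_usand _ _ hU1, Matrix.trace_diagonal]
    set Dm : Fin d' → Matrix Ξ Ξ ℂ := fun b => Matrix.diagonal (fun i => χ i b) with hDmdef
    have hDmH : ∀ b, (Dm b)ᴴ = Matrix.diagonal (fun i => star (χ i b)) := by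
      intro b
      rw [hDmdef, Matrix.diagonal_conjTranspose]
      rfl
    have hHad : Xᴴ * X = ∑ b, (Dm b)ᴴ * (Yᴴ * Y) * (Dm b) := by
      ext i i'
      rw [Matrix.sum_apply]
      have hterm : ∀ b, ((Dm b)ᴴ * (Yᴴ * Y) * (Dm b)) i i'
          = star (χ i b) * (Yᴴ * Y) i i' * χ i' b := by
        intro b
        rw [hDmH b, Matrix.mul_diagonal, Matrix.diagonal_mul]
      simp only [hterm]
      rw [Matrix.mul_apply]
      have hYY : (Yᴴ * Y) i i' = ∑ a, star (Y a i) * Y a i' := by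
        rw [Matrix.mul_apply]
        rfl
      rw [hYY]
      rw [Fintype.sum_prod_type]
      rw [Finset.sum_comm]
      refine Finset.sum_congr rfl fun b _ => ?_
      rw [Finset.mul_sum, Finset.sum_mul]
      refine Finset.sum_congr rfl fun a _ => ?_
      simp only [hXdef, hYdef, Matrix.of_apply, Matrix.conjTranspose_apply, star_mul',
        Complex.star_def, Complex.conj_ofReal]
      ring
    set L2 := ∑ b, (Dm b) * L * (Dm b)ᴴ with hL2def
    have hDD1 : ∑ b, (Dm b)ᴴ * (Dm b) = 1 := by
      ext i i'
      rw [Matrix.sum_apply]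
      have hterm : ∀ b, ((Dm b)ᴴ * (Dm b)) i i'
          = (if i = i' then star (χ i b) * χ i b else 0) := by
        intro b
        rw [hDmH b, hDmdef, Matrix.diagonal_mul_diagonal, Matrix.diagonal_apply]
      simp only [hterm]
      by_cases h : i = i'
      · subst h
        simp only [if_pos rfl, Matrix.one_apply_eq]
        exact hχ1 i
      · simp [h, Matrix.one_apply_ne h]
    have hDD2 : ∑ b, (Dm b) * (Dm b)ᴴ = 1 := by
      ext i i'
      rw [Matrix.sum_apply]
      have hterm : ∀ b, ((Dm b) * (Dm b)ᴴ) i i'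
          = (if i = i' then χ i b * star (χ i b) else 0) := by
        intro b
        rw [hDmH b, hDmdef, Matrix.diagonal_mul_diagonal, Matrix.diagonal_apply]
      simp only [hterm]
      by_cases h : i = i'
      · subst h
        simp only [if_pos rfl, Matrix.one_apply_eq]
        rw [← hχ1 i]
        exact Finset.sum_congr rfl fun b _ => mul_comm _ _
      · simp [h, Matrix.one_apply_ne h]
    have hL2tr : L2.trace = L.trace := by
      rw [hL2def, Matrix.trace_sum]
      have hterm : ∀ b, ((Dm b) * L * (Dm b)ᴴ).trace = ((Dm b)ᴴ * (Dm b) * L).trace := by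
        intro b
        rw [Matrix.trace_mul_cycle]
      rw [Finset.sum_congr rfl fun b _ => hterm b, ← Matrix.trace_sum, ← Finset.sum_mul, hDD1,
        Matrix.one_mul]
    have hLSA : (L2 * (Yᴴ * Y)).trace = (L * (Xᴴ * X)).trace := by
      rw [hHad, Matrix.mul_sum, Matrix.trace_sum, hL2def, Matrix.sum_mul, Matrix.trace_sum]
      refine Finset.sum_congr rfl fun b _ => ?_
      calc ((Dm b) * L * (Dm b)ᴴ * (Yᴴ * Y)).trace
          = ((Dm b) * (L * ((Dm b)ᴴ * (Yᴴ * Y)))).trace := by simp only [Matrix.mul_assoc]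
        _ = ((L * ((Dm b)ᴴ * (Yᴴ * Y))) * (Dm b)).trace := Matrix.trace_mul_comm _ _
        _ = (L * ((Dm b)ᴴ * (Yᴴ * Y) * (Dm b))).trace := by simp only [Matrix.mul_assoc]
    have hL2psd : L2.PosSemidef :=
      psd_sum _ _ fun b _ => hLpsd.mul_mul_conjTranspose_same (Dm b)
    have h1L2 : ((1 : Matrix Ξ Ξ ℂ) - L2).PosSemidef := by
      have he : (1 : Matrix Ξ Ξ ℂ) - L2 = ∑ b, (Dm b) * (1 - L) * (Dm b)ᴴ := by
        calc (1 : Matrix Ξ Ξ ℂ) - L2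
            = ∑ b, ((Dm b) * (Dm b)ᴴ - (Dm b) * L * (Dm b)ᴴ) := by
              rw [Finset.sum_sub_distrib, hDD2, hL2def]
          _ = ∑ b, (Dm b) * (1 - L) * (Dm b)ᴴ := by
              refine Finset.sum_congr rfl fun b _ => ?_
              rw [Matrix.mul_sub, Matrix.mul_one, Matrix.sub_mul]
      rw [he]
      exact psd_sum _ _ fun b _ => h1L.mul_mul_conjTranspose_same (Dm b)
    have hT2 := lemmaT Yᴴ L2 hL2psd h1L2 ρbar
      (by rw [Matrix.conjTranspose_conjTranspose]; exact hYρ) hherm c hc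
    rw [Matrix.conjTranspose_conjTranspose] at hT2
    have e1 : ((L * (Xᴴ * X)).trace).re = ∑ j, nd j * κ j := by
      rw [hLS, Complex.re_sum]
      refine Finset.sum_congr rfl fun j _ => ?_
      rw [← Complex.ofReal_mul]
      exact Complex.ofReal_re _
    have e2 : (L.trace).re = ∑ j, nd j := by
      rw [hLtr, Complex.re_sum]
      simp
    have e3 : ∑ j, max (κ j - c) 0 = ∑ j, nd j * (κ j - c) := by
      refine Finset.sum_congr rfl fun j _ => ?_
      by_cases h : c < κ j
      · rw [max_eq_left (by linarith), hnddef]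
        simp [h]
      · rw [max_eq_right (by push_neg at h; linarith), hnddef]
        simp [h]
    have efin : ((L2 * (Yᴴ * Y)).trace).re = ∑ j, nd j * κ j := by
      rw [hLSA]
      exact e1
    have efin2 : (L2.trace).re = ∑ j, nd j := by
      rw [hL2tr]
      exact e2
    calc ∑ j, max (κ j - c) 0 = ∑ j, nd j * (κ j - c) := e3
      _ = (∑ j, nd j * κ j) - c * ∑ j, nd j := by
          rw [Finset.mul_sum, ← Finset.sum_sub_distrib]
          refine Finset.sum_congr rfl fun j _ => ?_
          ring
      _ = ((L2 * (Yᴴ * Y)).trace).re - c * (L2.trace).re := by rw [efin, efin2]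
      _ ≤ ∑ j, max (hherm.eigenvalues j - c) 0 := by linarith [hT2]
  have hscal : ∀ j, max (hherm.eigenvalues j - c) 0 ≤ c ^ (1 - s) * (hherm.eigenvalues j) ^ s := by
    intro j
    rcases le_or_gt (hherm.eigenvalues j) c with h | h
    · have h1 : max (hherm.eigenvalues j - c) 0 = 0 := max_eq_right (by linarith)
      rw [h1]
      exact mul_nonneg (Real.rpow_nonneg hc.le _) (Real.rpow_nonneg (hlam0g j) _)
    · set lam := hherm.eigenvalues j with hlam
      have hlam0 : 0 ≤ lam := hlam0g j
      have h1 : (1 : ℝ) ≤ lam / c := (one_le_div hc).mpr h.le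
      have h2 : lam / c ≤ (lam / c) ^ s := by
        calc lam / c = (lam / c) ^ (1 : ℝ) := (Real.rpow_one _).symm
          _ ≤ (lam / c) ^ s := Real.rpow_le_rpow_of_exponent_le h1 hs
      have h3 : c * (lam / c) ≤ c * ((lam / c) ^ s) := mul_le_mul_of_nonneg_left h2 hc.le
      have e1 : c * (lam / c) = lam := by field_simp
      have e3 : (lam / c) ^ s = lam ^ s / c ^ s := Real.div_rpow hlam0 hc.le s
      have e2 : c ^ (1 - s) * lam ^ s = c * (lam ^ s / c ^ s) := by
        rw [Real.rpow_sub hc, Real.rpow_one]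
        ring
      rw [e3] at h3
      rw [e1] at h3
      rw [e2]
      have h4 : max (lam - c) 0 = lam - c := max_eq_left (by linarith)
      rw [h4]
      linarith
  calc ∑ i, p i * ((ptrace2 (V * F i * Vᴴ) * ρ i).trace).re
      ≤ ∑ i, p i * (dotProduct (star (fun z : Fin d × Fin d' => ψ i z.1 * χ i z.2))
          (P *ᵥ (fun z : Fin d × Fin d' => ψ i z.1 * χ i z.2))).re := by
        exact Finset.sum_le_sum fun i _ => mul_le_mul_of_nonneg_left (hχ2 i) (hp i)
    _ = ((P * (X * Xᴴ)).trace).re := hsumtr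
    _ ≤ c * (P.trace).re + ∑ j, max (hSh.eigenvalues j - c) 0 := hT1
    _ ≤ c * m + ∑ j, max (hherm.eigenvalues j - c) 0 := by
        rw [hPtr]
        linarith [hmid]
    _ ≤ c * m + c ^ (1 - s) * ∑ j, (hherm.eigenvalues j) ^ s := by
        rw [Finset.mul_sum]
        exact add_le_add_right (Finset.sum_le_sum fun j _ => hscal j) _
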